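/- Under the Ewens–Pitman weight system, the conditional expectation of the number of old blocks re-observed, given complete information, satisfies E[R | π] = j − (1/(θ+n)_{m↑})·Σ_{i=1}^{n} m_i·(θ + n − i + σ)_{m↑}. -/

import Mathlib

open Finset

attribute [local instance] Classical.propDecidable

noncomputable section

/-- Rising factorial `x(x+1)⋯(x+N−1)`. -/
def risingFac (x : ℝ) (N : ℕ) : ℝ := ∏ i ∈ Finset.range N, (x + i)

/-- Falling factorial `x(x−1)⋯(x−N+1)`. -/
def fallingFac (x : ℝ) (N : ℕ) : ℝ := ∏ i ∈ Finset.range N, (x - i)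

/-- Noncentral generalized factorial coefficient `C(N,k;σ,γ)`. -/
def gfc (N k : ℕ) (σ γ : ℝ) : ℝ :=
  (1 / (Nat.factorial k : ℝ)) *
    ∑ i ∈ Finset.range (k + 1),
      (-1 : ℝ) ^ i * (Nat.choose k i : ℝ) * risingFac (-(i : ℝ) * σ - γ) N

/-- Central generalized factorial coefficient `C(N,k;σ)`. -/
def cgfc (N k : ℕ) (σ : ℝ) : ℝ := gfc N k σ 0

/-- Binomial coefficient over `ℤ`, zero unless `0 ≤ b ≤ a`. -/
def ibinom (a b : ℤ) : ℝ :=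
  if 0 ≤ b ∧ b ≤ a then (Nat.choose a.toNat b.toNat : ℝ) else 0

/-- Multinomial coefficient `m!/((l!)^r (m−rl)!)`, zero if `rl > m`. -/
def multinom (m l r : ℕ) : ℝ :=
  if r * l ≤ m then
    (Nat.factorial m : ℝ) / ((Nat.factorial l : ℝ) ^ r * (Nat.factorial (m - r * l) : ℝ))
  else 0

/-- `P` is a set partition of the finset `s`. -/
def IsPartOn {α : Type*} (s : Finset α) (P : Finset (Finset α)) : Prop :=
  (∀ B ∈ P, B ⊆ s) ∧ ∅ ∉ P ∧ ∀ a ∈ s, ∃! B, B ∈ P ∧ a ∈ B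

/-- Restriction of a partition to `s`. -/
def restrictPart {α : Type*} [DecidableEq α] (P : Finset (Finset α)) (s : Finset α) :
    Finset (Finset α) := (P.image fun C => C ∩ s).erase ∅

/-- Gibbs probability of a partition with block sizes `|C|` and `VN k` the Gibbs weight. -/
def gibbsW {α : Type*} (σ : ℝ) (VN : ℕ → ℝ) (P : Finset (Finset α)) : ℝ :=
  VN P.card * ∏ C ∈ P, risingFac (1 - σ) (C.card - 1)

/-- Ewens–Pitman weight system. -/
def EPV (σ θ : ℝ) : ℕ → ℕ → ℝ :=
  fun N k => (∏ i ∈ Finset.range k, (θ + (i : ℝ) * σ)) / risingFac θ N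

/-- The "old" elements `{1,…,n}` inside `{1,…,n+m}`. -/
def oldSet (n m : ℕ) : Finset (Fin (n + m)) :=
  Finset.univ.filter fun x => (x : ℕ) < n

/-- Number of new elements in the block of `ρ` containing the old block `Bi`. -/
def Scount (n m : ℕ) (Bi : Finset (Fin (n + m))) (ρ : Finset (Finset (Fin (n + m)))) : ℕ :=
  ∑ C ∈ ρ.filter (fun C => Bi ⊆ C), (C \ oldSet n m).card

/-- Partitions of `{1,…,n+m}` extending the partition `πP` of the old elements. -/
def extensions (n m : ℕ) (πP : Finset (Finset (Fin (n + m)))) :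
    Finset (Finset (Finset (Fin (n + m)))) :=
  Finset.univ.filter fun ρ => IsPartOn Finset.univ ρ ∧ restrictPart ρ (oldSet n m) = πP

/-- Conditional expectation given complete information (the initial partition `πP`). -/
def condExpPi (σ : ℝ) (V : ℕ → ℕ → ℝ) (n m : ℕ) (πP : Finset (Finset (Fin (n + m))))
    (f : Finset (Finset (Fin (n + m))) → ℝ) : ℝ :=
  (∑ ρ ∈ extensions n m πP, f ρ * gibbsW σ (V (n + m)) ρ) /
    (∑ ρ ∈ extensions n m πP, gibbsW σ (V (n + m)) ρ)

/-- Partitions of `{1,…,n+m}` whose restriction to the old elements has exactly `j` blocks. -/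
def withJ (n m j : ℕ) : Finset (Finset (Finset (Fin (n + m)))) :=
  Finset.univ.filter fun ρ =>
    IsPartOn Finset.univ ρ ∧ (restrictPart ρ (oldSet n m)).card = j

/-- Partitions of `s` with exactly `j` blocks. -/
def partsJOf {α : Type*} [Fintype α] (s : Finset α) (j : ℕ) :
    Finset (Finset (Finset α)) :=
  Finset.univ.filter fun π' => IsPartOn s π' ∧ π'.card = j

/-- Conditional expectation given the incomplete information `K_n = j`. -/
def condExpK (σ : ℝ) (V : ℕ → ℕ → ℝ) (n m j : ℕ)
    (f : Finset (Finset (Fin (n + m))) → ℝ) : ℝ :=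
  (∑ ρ ∈ withJ n m j, f ρ * gibbsW σ (V (n + m)) ρ) /
    (∑ π' ∈ partsJOf (oldSet n m) j, gibbsW σ (V n) π')

/-- Number of old blocks (indexed by `B`) re-observed in the additional sample. -/
def RcntB (n m j : ℕ) (B : Fin j → Finset (Fin (n + m)))
    (ρ : Finset (Finset (Fin (n + m)))) : ℕ :=
  (Finset.univ.filter fun i : Fin j => Scount n m (B i) ρ ≠ 0).card

/-- Number of old blocks (indexed by `B`) re-observed with frequency `l`. -/
def RlcntB (n m j l : ℕ) (B : Fin j → Finset (Fin (n + m)))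
    (ρ : Finset (Finset (Fin (n + m)))) : ℕ :=
  (Finset.univ.filter fun i : Fin j => Scount n m (B i) ρ = l).card

/-- Number of blocks of the restriction whose containing block has a new element. -/
def Rcnt (n m : ℕ) (ρ : Finset (Finset (Fin (n + m)))) : ℕ :=
  ((restrictPart ρ (oldSet n m)).filter fun Bi =>
    ∃ C ∈ ρ, Bi ⊆ C ∧ (C \ oldSet n m) ≠ ∅).card

/-- Number of blocks of the restriction whose containing block has exactly `l` new elements. -/
def Rlcnt (n m l : ℕ) (ρ : Finset (Finset (Fin (n + m)))) : ℕ :=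
  ((restrictPart ρ (oldSet n m)).filter fun Bi =>
    ∃ C ∈ ρ, Bi ⊆ C ∧ (C \ oldSet n m).card = l).card

/-- Number of bijections from `Fin j` onto the blocks of `π'` satisfying `Q`. -/
def bijCount {α : Type*} [Fintype α] (j : ℕ) (π' : Finset (Finset α))
    (Q : (Fin j → Finset α) → Prop) : ℕ :=
  ((Finset.univ : Finset (Fin j → Finset α)).filter fun β =>
    Function.Injective β ∧ Finset.image β Finset.univ = π' ∧ Q β).card

/-- Conditional expectation given almost-complete information. -/
def condExpTau (σ : ℝ) (V : ℕ → ℕ → ℝ) (n m j p : ℕ) (τ : Fin p → Fin j) (nτ : Fin p → ℕ)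
    (f : Finset (Finset (Fin (n + m))) → ℝ) : ℝ :=
  (∑ ρ ∈ withJ n m j,
      (bijCount j (restrictPart ρ (oldSet n m)) (fun β => ∀ i, (β (τ i)).card = nτ i) : ℝ) *
        f ρ * gibbsW σ (V (n + m)) ρ) /
    (∑ π' ∈ partsJOf (oldSet n m) j,
      (bijCount j π' (fun β => ∀ i, (β (τ i)).card = nτ i) : ℝ) * gibbsW σ (V n) π')

/-!
Write `W_θ(ρ) = ∏_{i < |ρ|} (θ + iσ) · ∏_{C ∈ ρ} (1 - σ)_{(|C|-1)↑}`, so that the Ewens–Pitman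
probability of a partition `ρ` of an `N`-set is `W_θ(ρ) / (θ)_{N↑}`. A new element either opens a
block of `ρ` (factor `θ + |ρ|σ`) or joins a block `C` (factor `|C| - σ`); over a partition of a
`k`-set these factors add up to `θ + k`, so the extensions of `π` by `m` new elements have total
weight `(θ + n)_{m↑} W_θ(π)`. The extensions in which an old block `B` receives no new element are
the extensions of `π \ {B}` with `B` set aside, and setting a block aside turns `W_θ` into
`θ (1 - σ)_{(|B|-1)↑} W_{θ+σ}`; so they weigh `(θ + n - |B| + σ)_{m↑} W_θ(π)`. Hence
`E[R | π] = Σ_B (1 - P[S_B = 0 | π])`, and grouping the blocks by size gives the formula.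
-/

section Partitions

variable {α : Type*} {s u : Finset α} {P : Finset (Finset α)}

namespace IsPartOn

theorem eq_of_mem_of_mem (h : IsPartOn s P) {C D : Finset α} (hC : C ∈ P) (hD : D ∈ P) {x : α}
    (hxC : x ∈ C) (hxD : x ∈ D) : C = D := by
  obtain ⟨E, -, hE⟩ := h.2.2 x (h.1 C hC hxC)
  rw [hE C ⟨hC, hxC⟩, hE D ⟨hD, hxD⟩]

theorem nonempty_of_mem (h : IsPartOn s P) {C : Finset α} (hC : C ∈ P) : C.Nonempty :=
  nonempty_iff_ne_empty.mpr fun h0 => h.2.1 (h0 ▸ hC)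

theorem notMem_of_notMem (h : IsPartOn s P) {a : α} (ha : a ∉ s) {C : Finset α} (hC : C ∈ P) :
    a ∉ C :=
  fun haC => ha (h.1 C hC haC)

theorem sum_card [DecidableEq α] (h : IsPartOn s P) : ∑ C ∈ P, #C = #s := by
  have hs : s = P.biUnion id := by
    ext x
    simp only [mem_biUnion, id]
    refine ⟨fun hx => ?_, fun ⟨C, hC, hxC⟩ => h.1 C hC hxC⟩
    obtain ⟨C, ⟨hC, hxC⟩, -⟩ := h.2.2 x hx
    exact ⟨C, hC, hxC⟩
  rw [hs, card_biUnion (t := id) fun C hC D hD hne =>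
    disjoint_left.mpr fun _ hxC hxD => hne (h.eq_of_mem_of_mem hC hD hxC hxD)]
  rfl

theorem erase [DecidableEq α] (h : IsPartOn s P) {b : Finset α} (hb : b ∈ P) :
    IsPartOn (s \ b) (P.erase b) := by
  refine ⟨fun C hC x hx => ?_, fun h0 => h.2.1 (mem_of_mem_erase h0), fun x hx => ?_⟩
  · exact mem_sdiff.mpr ⟨h.1 C (mem_of_mem_erase hC) hx, fun hxb =>
      (mem_erase.mp hC).1 (h.eq_of_mem_of_mem (mem_of_mem_erase hC) hb hx hxb)⟩
  · obtain ⟨hxs, hxb⟩ := mem_sdiff.mp hx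
    obtain ⟨D, ⟨hD, hxD⟩, hDu⟩ := h.2.2 x hxs
    exact ⟨D, ⟨mem_erase.mpr ⟨fun hDb => hxb (hDb ▸ hxD), hD⟩, hxD⟩,
      fun Y hY => hDu Y ⟨mem_of_mem_erase hY.1, hY.2⟩⟩

theorem insert_of_sdiff [DecidableEq α] {b : Finset α} (h : IsPartOn (s \ b) P) (hbs : b ⊆ s)
    (hb : b.Nonempty) : IsPartOn s (insert b P) := by
  refine ⟨fun C hC => ?_, fun h0 => ?_, fun x hx => ?_⟩
  · rcases mem_insert.mp hC with rfl | hC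
    exacts [hbs, (h.1 C hC).trans sdiff_subset]
  · rcases mem_insert.mp h0 with h0 | h0
    exacts [hb.ne_empty h0.symm, h.2.1 h0]
  · by_cases hxb : x ∈ b
    · refine ⟨b, ⟨mem_insert_self _ _, hxb⟩, fun Y ⟨hY, hxY⟩ => ?_⟩
      rcases mem_insert.mp hY with rfl | hY
      exacts [rfl, absurd hxb (mem_sdiff.mp (h.1 Y hY hxY)).2]
    · obtain ⟨D, ⟨hD, hxD⟩, hDu⟩ := h.2.2 x (mem_sdiff.mpr ⟨hx, hxb⟩)
      refine ⟨D, ⟨mem_insert_of_mem hD, hxD⟩, fun Y ⟨hY, hxY⟩ => ?_⟩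
      rcases mem_insert.mp hY with rfl | hY
      exacts [absurd hxY hxb, hDu Y ⟨hY, hxY⟩]

end IsPartOn

variable [DecidableEq α]

theorem restrictPart_eq_self (h : IsPartOn s P) : restrictPart P s = P := by
  rw [restrictPart, image_congr fun C hC => inter_eq_left.mpr (h.1 C hC), image_id',
    erase_eq_of_notMem h.2.1]

theorem restrictPart_restrictPart (P : Finset (Finset α)) (hsu : s ⊆ u) :
    restrictPart (restrictPart P u) s = restrictPart P s := by
  ext X
  simp only [restrictPart, mem_erase, mem_image]
  constructor
  · rintro ⟨hX, E, ⟨-, D, hD, rfl⟩, rfl⟩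
    exact ⟨hX, D, hD, by rw [inter_assoc, inter_eq_right.mpr hsu]⟩
  · rintro ⟨hX, D, hD, rfl⟩
    refine ⟨hX, D ∩ u, ⟨fun h0 => hX ?_, D, hD, rfl⟩,
      by rw [inter_assoc, inter_eq_right.mpr hsu]⟩
    exact subset_empty.mp (h0 ▸ inter_subset_inter_left hsu)

theorem IsPartOn.restrict (h : IsPartOn u P) (hsu : s ⊆ u) : IsPartOn s (restrictPart P s) := by
  refine ⟨fun X hX => ?_, by simp [restrictPart], fun x hx => ?_⟩
  · obtain ⟨-, D, -, rfl⟩ := by simpa only [restrictPart, mem_erase, mem_image] using hX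
    exact inter_subset_right
  · obtain ⟨D, ⟨hD, hxD⟩, hDu⟩ := h.2.2 x (hsu hx)
    refine ⟨D ∩ s, ⟨?_, mem_inter.mpr ⟨hxD, hx⟩⟩, fun Y ⟨hY, hxY⟩ => ?_⟩
    · simp only [restrictPart, mem_erase, mem_image]
      exact ⟨nonempty_iff_ne_empty.mp ⟨x, mem_inter.mpr ⟨hxD, hx⟩⟩, D, hD, rfl⟩
    · obtain ⟨-, E, hE, rfl⟩ := by simpa only [restrictPart, mem_erase, mem_image] using hY
      rw [hDu E ⟨hE, (mem_inter.mp hxY).1⟩]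

theorem notMem_restrictPart_sdiff (P : Finset (Finset α)) {b : Finset α} (hb : b.Nonempty) :
    b ∉ restrictPart P (s \ b) := by
  simp only [restrictPart, mem_erase, mem_image, not_and, not_exists]
  rintro - C - hCb
  obtain ⟨x, hx⟩ := hb
  exact (mem_sdiff.mp (mem_inter.mp (hCb ▸ hx)).2).2 hx

theorem restrictPart_insert {v b : Finset α} {ρ₀ : Finset (Finset α)}
    (hρ₀ : IsPartOn (v \ b) ρ₀) (hbs : b ⊆ s) (hb : b.Nonempty) :
    restrictPart (insert b ρ₀) s = insert b (restrictPart ρ₀ (s \ b)) := by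
  have hblocks : ∀ C ∈ ρ₀, C ∩ s = C ∩ (s \ b) := fun C hC => by
    ext x
    simp only [mem_inter, mem_sdiff, and_congr_right_iff, iff_self_and]
    exact fun hxC _ hxb => (mem_sdiff.mp (hρ₀.1 C hC hxC)).2 hxb
  rw [restrictPart, image_insert, inter_eq_left.mpr hbs, erase_insert_of_ne hb.ne_empty,
    image_congr hblocks, ← restrictPart]

end Partitions

section OneNewElement

variable {α : Type*} [DecidableEq α] {u : Finset α} {ρ : Finset (Finset α)} {a : α}

def addToBlock (a : α) (C : Finset α) (ρ : Finset (Finset α)) : Finset (Finset α) :=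
  insert (insert a C) (ρ.erase C)

theorem IsPartOn.insert_singleton (h : IsPartOn u ρ) (ha : a ∉ u) :
    IsPartOn (insert a u) (insert {a} ρ) := by
  refine IsPartOn.insert_of_sdiff ?_ (singleton_subset_iff.mpr (mem_insert_self a u))
    (singleton_nonempty a)
  rwa [insert_sdiff_of_mem _ (mem_singleton_self a), sdiff_singleton_eq_erase,
    erase_eq_of_notMem ha]

theorem IsPartOn.addToBlock (h : IsPartOn u ρ) (ha : a ∉ u) {C : Finset α} (hC : C ∈ ρ) :
    IsPartOn (insert a u) (addToBlock a C ρ) := by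
  refine IsPartOn.insert_of_sdiff ?_ (insert_subset_insert a (h.1 C hC)) (insert_nonempty a C)
  rw [insert_sdiff_insert, sdiff_insert_of_notMem ha]
  exact h.erase hC

theorem restrictPart_insert_singleton (h : IsPartOn u ρ) (ha : a ∉ u) :
    restrictPart (insert {a} ρ) u = ρ := by
  rw [restrictPart, image_insert, singleton_inter_of_notMem ha,
    image_congr fun D hD => inter_eq_left.mpr (h.1 D hD), image_id', erase_insert h.2.1]

theorem restrictPart_addToBlock (h : IsPartOn u ρ) (ha : a ∉ u) {C : Finset α} (hC : C ∈ ρ) :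
    restrictPart (addToBlock a C ρ) u = ρ := by
  rw [restrictPart, addToBlock, image_insert, insert_inter_of_notMem ha,
    inter_eq_left.mpr (h.1 C hC),
    image_congr fun D hD => inter_eq_left.mpr (h.1 D (mem_of_mem_erase hD)), image_id',
    insert_erase hC, erase_eq_of_notMem h.2.1]

theorem eq_insert_singleton_or_addToBlock {ρ' : Finset (Finset α)} (ha : a ∉ u)
    (h : IsPartOn (insert a u) ρ') :
    ρ' = insert {a} (restrictPart ρ' u) ∨
      ∃ C ∈ restrictPart ρ' u, ρ' = addToBlock a C (restrictPart ρ' u) := by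
  obtain ⟨D, ⟨hD, haD⟩, -⟩ := h.2.2 a (mem_insert_self a u)
  have hrest : IsPartOn (insert a u \ D) (ρ'.erase D) := h.erase hD
  by_cases hDa : D = {a}
  · subst hDa
    rw [insert_sdiff_of_mem _ (mem_singleton_self a), sdiff_singleton_eq_erase,
      erase_eq_of_notMem ha] at hrest
    have hρ' : ρ' = insert {a} (ρ'.erase {a}) := (insert_erase hD).symm
    left
    conv_rhs => rw [hρ', restrictPart_insert_singleton hrest ha, ← hρ']
  · right
    set C := D.erase a
    have hDC : D = insert a C := (insert_erase haD).symm
    have hC : C.Nonempty := by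
      by_contra hC
      exact hDa (by rw [hDC, not_nonempty_iff_eq_empty.mp hC, insert_empty])
    have hsd : insert a u \ D = u \ C := by
      rw [hDC, insert_sdiff_insert, sdiff_insert_of_notMem ha]
    rw [hsd] at hrest
    have hCu : C ⊆ u := fun x hx => by
      rcases mem_insert.mp (h.1 D hD (mem_of_mem_erase hx)) with rfl | hxu
      exacts [absurd hx (notMem_erase x D), hxu]
    have hCnot : C ∉ ρ'.erase D := fun hCmem => by
      obtain ⟨x, hx⟩ := hC
      exact (mem_sdiff.mp (hrest.1 C hCmem hx)).2 hx
    have hpart : IsPartOn u (insert C (ρ'.erase D)) := hrest.insert_of_sdiff hCu hC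
    have hadd : ρ' = addToBlock a C (insert C (ρ'.erase D)) := by
      rw [addToBlock, erase_insert hCnot, ← hDC, insert_erase hD]
    have hres : restrictPart ρ' u = insert C (ρ'.erase D) := by
      conv_lhs => rw [hadd]
      exact restrictPart_addToBlock hpart ha (mem_insert_self _ _)
    rw [hres]
    exact ⟨C, mem_insert_self _ _, hadd⟩

theorem addToBlock_injOn (h : IsPartOn u ρ) (ha : a ∉ u) :
    Set.InjOn (fun C => addToBlock a C ρ) ρ := by
  intro C hC C' hC' (heq : addToBlock a C ρ = addToBlock a C' ρ)
  have hmem : insert a C ∈ addToBlock a C' ρ := heq ▸ mem_insert_self _ _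
  rcases mem_insert.mp hmem with hCC' | hmem
  · simpa [erase_insert (h.notMem_of_notMem ha hC), erase_insert (h.notMem_of_notMem ha hC')]
      using congrArg (·.erase a) hCC'
  · exact absurd (mem_insert_self a C) (h.notMem_of_notMem ha (mem_of_mem_erase hmem))

theorem insert_singleton_ne_addToBlock (h : IsPartOn u ρ) (ha : a ∉ u) {C : Finset α}
    (hC : C ∈ ρ) : insert {a} ρ ≠ addToBlock a C ρ := by
  intro heq
  have hmem : {a} ∈ addToBlock a C ρ := heq ▸ mem_insert_self _ _
  rcases mem_insert.mp hmem with haC | hmem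
  · obtain ⟨b, hb⟩ := h.nonempty_of_mem hC
    have hba : b = a := mem_singleton.mp (haC ▸ mem_insert_of_mem hb)
    exact h.notMem_of_notMem ha hC (hba ▸ hb)
  · exact ha (h.1 _ (mem_of_mem_erase hmem) (mem_singleton_self a))

end OneNewElement

section Extensions

variable {α : Type*} [Fintype α] [DecidableEq α] {v s u : Finset α} {π : Finset (Finset α)}

def partExtensions (v s : Finset α) (π : Finset (Finset α)) : Finset (Finset (Finset α)) :=
  Finset.univ.filter fun ρ => IsPartOn v ρ ∧ restrictPart ρ s = π

theorem mem_partExtensions {ρ : Finset (Finset α)} :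
    ρ ∈ partExtensions v s π ↔ IsPartOn v ρ ∧ restrictPart ρ s = π := by
  simp [partExtensions]

theorem sum_partExtensions_insert {M : Type*} [AddCommMonoid M] (hsu : s ⊆ u) {a : α}
    (ha : a ∉ u) (F : Finset (Finset α) → M) :
    ∑ ρ' ∈ partExtensions (insert a u) s π, F ρ' =
      ∑ ρ ∈ partExtensions u s π, (F (insert {a} ρ) + ∑ C ∈ ρ, F (addToBlock a C ρ)) := by
  have hmaps : ∀ ρ' ∈ partExtensions (insert a u) s π,
      restrictPart ρ' u ∈ partExtensions u s π := by
    intro ρ' hρ'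
    obtain ⟨hpart, hres⟩ := mem_partExtensions.mp hρ'
    exact mem_partExtensions.mpr
      ⟨hpart.restrict (subset_insert a u), by rw [restrictPart_restrictPart ρ' hsu, hres]⟩
  rw [← sum_fiberwise_of_maps_to hmaps F]
  refine sum_congr rfl fun ρ hρ => ?_
  obtain ⟨hpart, hres⟩ := mem_partExtensions.mp hρ
  have hfiber : {ρ' ∈ partExtensions (insert a u) s π | restrictPart ρ' u = ρ} =
      insert (insert {a} ρ) (ρ.image fun C => addToBlock a C ρ) := by
    ext ρ'
    simp only [mem_filter, mem_partExtensions, mem_insert, mem_image]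
    constructor
    · rintro ⟨⟨hpart', -⟩, rfl⟩
      rcases eq_insert_singleton_or_addToBlock ha hpart' with h | ⟨C, hC, h⟩
      exacts [Or.inl h, Or.inr ⟨C, hC, h.symm⟩]
    · have hext : ∀ ρ', restrictPart ρ' u = ρ → restrictPart ρ' s = π := fun ρ' h' => by
        rw [← restrictPart_restrictPart ρ' hsu, h', hres]
      rintro (rfl | ⟨C, hC, rfl⟩)
      · have h' := restrictPart_insert_singleton hpart ha
        exact ⟨⟨hpart.insert_singleton ha, hext _ h'⟩, h'⟩
      · have h' := restrictPart_addToBlock hpart ha hC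
        exact ⟨⟨hpart.addToBlock ha hC, hext _ h'⟩, h'⟩
  rw [hfiber, sum_insert, sum_image (addToBlock_injOn hpart ha)]
  simp only [mem_image, not_exists, not_and]
  exact fun C hC => (insert_singleton_ne_addToBlock hpart ha hC).symm

theorem sum_partExtensions_filter_mem {M : Type*} [AddCommMonoid M] (hsv : s ⊆ v)
    (hπ : IsPartOn s π) {b : Finset α} (hb : b ∈ π) (F : Finset (Finset α) → M) :
    ∑ ρ ∈ partExtensions v s π with b ∈ ρ, F ρ =
      ∑ ρ₀ ∈ partExtensions (v \ b) (s \ b) (π.erase b), F (insert b ρ₀) := by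
  have hbs : b ⊆ s := hπ.1 b hb
  have hbne : b.Nonempty := hπ.nonempty_of_mem hb
  refine sum_nbij' (fun ρ => ρ.erase b) (insert b) (fun ρ hρ => ?_) (fun ρ₀ hρ₀ => ?_)
    (fun ρ hρ => insert_erase (mem_filter.mp hρ).2) (fun ρ₀ hρ₀ => ?_)
    (fun ρ hρ => by rw [insert_erase (mem_filter.mp hρ).2])
  · obtain ⟨hρ, hbρ⟩ := mem_filter.mp hρ
    obtain ⟨hpart, hres⟩ := mem_partExtensions.mp hρ
    have herase := hpart.erase hbρ
    refine mem_partExtensions.mpr ⟨herase, ?_⟩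
    have h := restrictPart_insert herase hbs hbne
    rw [insert_erase hbρ, hres] at h
    rw [h, erase_insert (notMem_restrictPart_sdiff _ hbne)]
  · obtain ⟨hpart, hres⟩ := mem_partExtensions.mp hρ₀
    refine mem_filter.mpr ⟨mem_partExtensions.mpr
      ⟨hpart.insert_of_sdiff (hbs.trans hsv) hbne, ?_⟩, mem_insert_self _ _⟩
    rw [restrictPart_insert hpart hbs hbne, hres, insert_erase hb]
  · obtain ⟨hpart, -⟩ := mem_partExtensions.mp hρ₀
    exact erase_insert (restrictPart_eq_self hpart ▸ notMem_restrictPart_sdiff ρ₀ hbne)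

end Extensions

theorem risingFac_zero (x : ℝ) : risingFac x 0 = 1 := prod_range_zero _

theorem risingFac_succ (x : ℝ) (k : ℕ) : risingFac x (k + 1) = risingFac x k * (x + k) :=
  prod_range_succ _ _

theorem risingFac_add (x : ℝ) (a b : ℕ) :
    risingFac x (a + b) = risingFac x a * risingFac (x + a) b := by
  rw [risingFac, prod_range_add, risingFac, risingFac]
  congr 1
  exact prod_congr rfl fun i _ => by push_cast; ring

theorem risingFac_pos {x : ℝ} (hx : 0 < x) (N : ℕ) : 0 < risingFac x N :=
  prod_pos fun i _ => add_pos_of_pos_of_nonneg hx i.cast_nonneg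

section Weights

variable {α : Type*} (θ σ : ℝ)

def epWeight (ρ : Finset (Finset α)) : ℝ :=
  (∏ i ∈ range #ρ, (θ + i * σ)) * ∏ C ∈ ρ, risingFac (1 - σ) (#C - 1)

theorem gibbsW_EPV (N : ℕ) (ρ : Finset (Finset α)) :
    gibbsW σ (EPV σ θ N) ρ = epWeight θ σ ρ / risingFac θ N := by
  rw [gibbsW, EPV, epWeight, div_mul_eq_mul_div]

theorem epWeight_ne_zero {ρ : Finset (Finset α)} (hσ : σ < 1)
    (h : ∏ i ∈ range #ρ, (θ + i * σ) ≠ 0) : epWeight θ σ ρ ≠ 0 :=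
  mul_ne_zero h (prod_pos fun _ _ => risingFac_pos (by linarith) _).ne'

variable [DecidableEq α]

theorem epWeight_insert {ρ : Finset (Finset α)} {b : Finset α} (hb : b ∉ ρ) :
    epWeight θ σ (insert b ρ) = θ * risingFac (1 - σ) (#b - 1) * epWeight (θ + σ) σ ρ := by
  rw [epWeight, epWeight, card_insert_of_notMem hb, prod_insert hb, prod_range_succ']
  simp only [Nat.cast_add, Nat.cast_one, Nat.cast_zero, zero_mul, add_zero]
  rw [prod_congr rfl fun (i : ℕ) _ => show θ + ((i : ℝ) + 1) * σ = θ + σ + i * σ by ring]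
  ring

theorem epWeight_insert_singleton {ρ : Finset (Finset α)} {a : α} (h : {a} ∉ ρ) :
    epWeight θ σ (insert {a} ρ) = (θ + #ρ * σ) * epWeight θ σ ρ := by
  rw [epWeight, epWeight, card_insert_of_notMem h, prod_insert h, prod_range_succ, card_singleton,
    Nat.sub_self, risingFac_zero]
  ring

theorem epWeight_addToBlock {u : Finset α} {ρ : Finset (Finset α)} (hρ : IsPartOn u ρ) {a : α}
    (ha : a ∉ u) {C : Finset α} (hC : C ∈ ρ) :
    epWeight θ σ (addToBlock a C ρ) = (#C - σ) * epWeight θ σ ρ := by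
  have hnew : insert a C ∉ ρ.erase C := fun h =>
    hρ.notMem_of_notMem ha (mem_of_mem_erase h) (mem_insert_self a C)
  obtain ⟨k, hk⟩ : ∃ k, #C = k + 1 := ⟨#C - 1, (Nat.succ_pred_eq_of_pos
    (card_pos.mpr (hρ.nonempty_of_mem hC))).symm⟩
  rw [epWeight, epWeight, addToBlock, card_insert_of_notMem hnew, card_erase_add_one hC,
    prod_insert hnew, card_insert_of_notMem (hρ.notMem_of_notMem ha hC), hk,
    ← mul_prod_erase ρ _ hC, hk, Nat.add_sub_cancel, Nat.add_sub_cancel, risingFac_succ]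
  push_cast
  ring

theorem epWeight_insert_singleton_add_sum_addToBlock {u : Finset α} {ρ : Finset (Finset α)}
    (hρ : IsPartOn u ρ) {a : α} (ha : a ∉ u) :
    epWeight θ σ (insert {a} ρ) + ∑ C ∈ ρ, epWeight θ σ (addToBlock a C ρ) =
      (θ + #u) * epWeight θ σ ρ := by
  have hsingleton : {a} ∉ ρ := fun h => ha (hρ.1 _ h (mem_singleton_self a))
  rw [epWeight_insert_singleton θ σ hsingleton,
    sum_congr rfl fun C hC => epWeight_addToBlock θ σ hρ ha hC, ← sum_mul, sum_sub_distrib,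
    sum_const, nsmul_eq_mul, ← Nat.cast_sum, hρ.sum_card]
  ring

variable [Fintype α]

theorem sum_epWeight_partExtensions {s t : Finset α} (hst : Disjoint s t) {π : Finset (Finset α)}
    (hπ : IsPartOn s π) :
    ∑ ρ ∈ partExtensions (s ∪ t) s π, epWeight θ σ ρ =
      risingFac (θ + #s) #t * epWeight θ σ π := by
  induction t using Finset.induction_on with
  | empty =>
    have hself : partExtensions s s π = {π} := by
      ext ρ
      rw [mem_partExtensions, mem_singleton]
      constructor
      · rintro ⟨hρ, rfl⟩
        exact (restrictPart_eq_self hρ).symm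
      · rintro rfl
        exact ⟨hπ, restrictPart_eq_self hπ⟩
    rw [union_empty, hself, sum_singleton, card_empty, risingFac_zero, one_mul]
  | @insert a t ha ih =>
    have hst' : Disjoint s t := hst.mono_right (subset_insert a t)
    have ha' : a ∉ s ∪ t := by
      simp only [mem_union, not_or]
      exact ⟨fun has => disjoint_left.mp hst has (mem_insert_self a t), ha⟩
    rw [union_insert, sum_partExtensions_insert subset_union_left ha',
      sum_congr rfl fun ρ hρ => epWeight_insert_singleton_add_sum_addToBlock θ σ
        (mem_partExtensions.mp hρ).1 ha',
      ← mul_sum, ih hst', card_insert_of_notMem ha, risingFac_succ, card_union_of_disjoint hst']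
    push_cast
    ring

theorem sum_epWeight_partExtensions_filter_mem {s t : Finset α} (hst : Disjoint s t)
    {π : Finset (Finset α)} (hπ : IsPartOn s π) {b : Finset α} (hb : b ∈ π) :
    ∑ ρ ∈ partExtensions (s ∪ t) s π with b ∈ ρ, epWeight θ σ ρ =
      risingFac (θ + #s - #b + σ) #t * epWeight θ σ π := by
  have hbs : b ⊆ s := hπ.1 b hb
  have hbne : b.Nonempty := hπ.nonempty_of_mem hb
  have hsd : (s ∪ t) \ b = (s \ b) ∪ t := by
    rw [union_sdiff_distrib, sdiff_eq_self_of_disjoint (hst.symm.mono_right hbs)]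
  have hrest : IsPartOn (s \ b) (π.erase b) := hπ.erase hb
  have hsplit : ∀ ρ₀ ∈ partExtensions ((s \ b) ∪ t) (s \ b) (π.erase b),
      epWeight θ σ (insert b ρ₀) = θ * risingFac (1 - σ) (#b - 1) * epWeight (θ + σ) σ ρ₀ := by
    intro ρ₀ hρ₀
    have hb₀ : b ∉ restrictPart ρ₀ ((s ∪ t) \ b) := notMem_restrictPart_sdiff ρ₀ hbne
    rw [hsd, restrictPart_eq_self (mem_partExtensions.mp hρ₀).1] at hb₀
    exact epWeight_insert θ σ hb₀
  rw [sum_partExtensions_filter_mem subset_union_left hπ hb, hsd, sum_congr rfl hsplit,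
    ← mul_sum, sum_epWeight_partExtensions (θ + σ) σ (hst.mono_left sdiff_subset) hrest,
    ← insert_erase hb, epWeight_insert θ σ (notMem_erase b π), erase_insert (notMem_erase b π),
    card_sdiff_of_subset hbs, Nat.cast_sub (card_le_card hbs)]
  ring_nf

end Weights

theorem sum_comp_eq_sum_card_filter_mul {ι R : Type*} [Fintype ι] [Semiring R] {g : ι → ℕ}
    {a b : ℕ} (hg : ∀ i, g i ∈ Icc a b) (f : ℕ → R) :
    ∑ i, f (g i) = ∑ k ∈ Icc a b, (#{i | g i = k} : R) * f k := by
  rw [← sum_fiberwise_of_maps_to fun i _ => hg i]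
  refine sum_congr rfl fun k _ => ?_
  rw [sum_congr rfl fun i hi => by rw [(mem_filter.mp hi).2], sum_const, nsmul_eq_mul]

section Sample

variable {n m : ℕ} (θ σ : ℝ)

theorem card_oldSet (n m : ℕ) : #(oldSet n m) = n := by
  have h : oldSet n m = univ.map (Fin.castAddEmb m) := by
    ext x
    simp only [oldSet, mem_filter, mem_univ, true_and, mem_map]
    exact ⟨fun hx => ⟨⟨x, hx⟩, rfl⟩, by rintro ⟨y, rfl⟩; exact y.isLt⟩
  rw [h, card_map, card_univ, Fintype.card_fin]

theorem extensions_eq_partExtensions (π : Finset (Finset (Fin (n + m)))) :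
    extensions n m π = partExtensions univ (oldSet n m) π :=
  rfl

theorem sum_epWeight_extensions {π : Finset (Finset (Fin (n + m)))}
    (hπ : IsPartOn (oldSet n m) π) :
    ∑ ρ ∈ extensions n m π, epWeight θ σ ρ = risingFac (θ + n) m * epWeight θ σ π := by
  rw [extensions_eq_partExtensions, ← union_sdiff_of_subset (subset_univ (oldSet n m)),
    sum_epWeight_partExtensions θ σ disjoint_sdiff hπ, card_univ_sdiff, card_oldSet,
    Fintype.card_fin, Nat.add_sub_cancel_left]

theorem sum_epWeight_extensions_filter_mem {π : Finset (Finset (Fin (n + m)))}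
    (hπ : IsPartOn (oldSet n m) π) {b : Finset (Fin (n + m))} (hb : b ∈ π) :
    ∑ ρ ∈ extensions n m π with b ∈ ρ, epWeight θ σ ρ =
      risingFac (θ + n - #b + σ) m * epWeight θ σ π := by
  rw [extensions_eq_partExtensions, ← union_sdiff_of_subset (subset_univ (oldSet n m)),
    sum_epWeight_partExtensions_filter_mem θ σ disjoint_sdiff hπ hb, card_univ_sdiff, card_oldSet,
    Fintype.card_fin, Nat.add_sub_cancel_left]

theorem Scount_eq_zero_iff {π ρ : Finset (Finset (Fin (n + m)))} {b : Finset (Fin (n + m))}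
    (hb : b ∈ π) (hρ : ρ ∈ extensions n m π) : Scount n m b ρ = 0 ↔ b ∈ ρ := by
  obtain ⟨hpart, rfl⟩ := mem_partExtensions.mp hρ
  obtain ⟨hbne, D, hD, rfl⟩ : b ≠ ∅ ∧ ∃ D ∈ ρ, D ∩ oldSet n m = b := by
    simpa [restrictPart] using hb
  obtain ⟨x, hx⟩ := nonempty_iff_ne_empty.mpr hbne
  have hfilter : {C ∈ ρ | D ∩ oldSet n m ⊆ C} = {D} := by
    ext C
    simp only [mem_filter, mem_singleton]
    refine ⟨fun ⟨hC, hsub⟩ => hpart.eq_of_mem_of_mem hC hD (hsub hx) (mem_inter.mp hx).1, ?_⟩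
    rintro rfl
    exact ⟨hD, inter_subset_left⟩
  rw [Scount, hfilter, sum_singleton, card_eq_zero, sdiff_eq_empty_iff_subset]
  exact ⟨fun h => by rwa [inter_eq_left.mpr h],
    fun h => inter_eq_left.mp (hpart.eq_of_mem_of_mem h hD hx (mem_inter.mp hx).1)⟩

variable {j : ℕ} {B : Fin j → Finset (Fin (n + m))}

theorem RcntB_eq_sum {ρ : Finset (Finset (Fin (n + m)))}
    (hρ : ρ ∈ extensions n m (image B univ)) :
    (RcntB n m j B ρ : ℝ) = ∑ ℓ, (1 - if B ℓ ∈ ρ then 1 else 0) := by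
  rw [RcntB, card_filter, Nat.cast_sum]
  refine sum_congr rfl fun ℓ _ => ?_
  have h := Scount_eq_zero_iff (mem_image_of_mem B (mem_univ ℓ)) hρ
  by_cases hℓ : B ℓ ∈ ρ <;> simp [h, hℓ]

theorem sum_RcntB_mul_epWeight (hπ : IsPartOn (oldSet n m) (image B univ)) :
    ∑ ρ ∈ extensions n m (image B univ), (RcntB n m j B ρ : ℝ) * epWeight θ σ ρ =
      ∑ ℓ, (risingFac (θ + n) m - risingFac (θ + n - #(B ℓ) + σ) m) *
        epWeight θ σ (image B univ) := by
  calc ∑ ρ ∈ extensions n m (image B univ), (RcntB n m j B ρ : ℝ) * epWeight θ σ ρ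
      = ∑ ℓ, (∑ ρ ∈ extensions n m (image B univ), epWeight θ σ ρ -
          ∑ ρ ∈ extensions n m (image B univ) with B ℓ ∈ ρ, epWeight θ σ ρ) := by
        rw [sum_congr rfl fun ρ hρ => by rw [RcntB_eq_sum hρ, sum_mul], sum_comm]
        refine sum_congr rfl fun ℓ _ => ?_
        rw [sum_filter, ← sum_sub_distrib]
        exact sum_congr rfl fun ρ _ => by split_ifs <;> ring
    _ = _ := by
        refine sum_congr rfl fun ℓ _ => ?_
        rw [sum_epWeight_extensions θ σ hπ,
          sum_epWeight_extensions_filter_mem θ σ hπ (mem_image_of_mem B (mem_univ ℓ)), sub_mul]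

end Sample

theorem condExpPi_EPV {n m : ℕ} {σ θ : ℝ} (hθ : risingFac θ (n + m) ≠ 0)
    (π : Finset (Finset (Fin (n + m)))) (f : Finset (Finset (Fin (n + m))) → ℝ) :
    condExpPi σ (EPV σ θ) n m π f =
      (∑ ρ ∈ extensions n m π, f ρ * epWeight θ σ ρ) / ∑ ρ ∈ extensions n m π, epWeight θ σ ρ := by
  simp only [condExpPi, gibbsW_EPV, ← mul_div_assoc, ← sum_div]
  exact div_div_div_cancel_right₀ hθ _ _

theorem looking_backward_estimator_complete_EP_general
    (n m j : ℕ) (hn : 1 ≤ n)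
    (σ θ : ℝ) (hσ1 : σ < 1) (hθ : -σ < θ)
    (B : Fin j → Finset (Fin (n + m))) (hBinj : Function.Injective B)
    (hπ : IsPartOn (oldSet n m) (Finset.image B Finset.univ))
    (hVnj : 0 < EPV σ θ n j) :
    condExpPi σ (EPV σ θ) n m (Finset.image B Finset.univ)
        (fun ρ => (RcntB n m j B ρ : ℝ)) =
      (j : ℝ) -
        (1 / risingFac (θ + n) m) *
          ∑ i ∈ Finset.Icc 1 n,
            ((Finset.univ.filter fun ℓ : Fin j => (B ℓ).card = i).card : ℝ) *
              risingFac (θ + (n : ℝ) - (i : ℝ) + σ) m := by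
  have hcard : #(image B univ) = j := by
    rw [card_image_of_injective _ hBinj, card_univ, Fintype.card_fin]
  obtain ⟨hprod, hθn⟩ := div_ne_zero_iff.mp hVnj.ne'
  have hW : epWeight θ σ (image B univ) ≠ 0 := epWeight_ne_zero θ σ hσ1 (by rwa [hcard])
  have hrise : 0 < risingFac (θ + n) m := by
    have : (1 : ℝ) ≤ n := by exact_mod_cast hn
    exact risingFac_pos (by linarith) m
  have hsizes : ∀ ℓ, #(B ℓ) ∈ Icc 1 n := fun ℓ => by
    have hmem := mem_image_of_mem B (mem_univ ℓ)
    exact mem_Icc.mpr ⟨card_pos.mpr (hπ.nonempty_of_mem hmem),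
      (card_le_card (hπ.1 _ hmem)).trans_eq (card_oldSet n m)⟩
  rw [condExpPi_EPV (by rw [risingFac_add]; exact mul_ne_zero hθn hrise.ne'),
    sum_RcntB_mul_epWeight θ σ hπ, sum_epWeight_extensions θ σ hπ, ← sum_mul, sum_sub_distrib,
    sum_const, card_univ, Fintype.card_fin, nsmul_eq_mul,
    sum_comp_eq_sum_card_filter_mul hsizes fun i => risingFac (θ + n - i + σ) m]
  field_simp

/-- Ewens–Pitman, expected number of re-observed old species,
given complete information. -/
theorem looking_backward_estimator_complete_EP
    (n m j : ℕ) (hn : 1 ≤ n) (hm : 1 ≤ m)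
    (σ θ : ℝ) (hσ0 : 0 < σ) (hσ1 : σ < 1) (hθ : -σ < θ)
    (B : Fin j → Finset (Fin (n + m))) (hBinj : Function.Injective B)
    (hπ : IsPartOn (oldSet n m) (Finset.image B Finset.univ))
    (hVnj : 0 < EPV σ θ n j) :
    condExpPi σ (EPV σ θ) n m (Finset.image B Finset.univ)
        (fun ρ => (RcntB n m j B ρ : ℝ)) =
      (j : ℝ) -
        (1 / risingFac (θ + n) m) *
          ∑ i ∈ Finset.Icc 1 n,
            ((Finset.univ.filter fun ℓ : Fin j => (B ℓ).card = i).card : ℝ) *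
              risingFac (θ + (n : ℝ) - (i : ℝ) + σ) m :=
  looking_backward_estimator_complete_EP_general n m j hn σ θ hσ1 hθ B hBinj hπ hVnj
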